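/- For every real constant h, the function U(ξ) = 4 arctan(h e^{−ξ} + √(h² e^{−2ξ} + 1)) satisfies U'(ξ) = sin U(ξ) for all ξ ∈ ℝ (the case γ = 0). -/

import Mathlib

/-!
Writing `a = h e^{-ξ}`, the argument of the arctangent is `a + √(a² + 1)`, whose inverse is
`√(a² + 1) - a`. The addition formula for `arctan` then gives
`2 arctan (a + √(a² + 1)) = arctan a + π / 2`, so `U ξ = 2 arctan (h e^{-ξ}) + π`, the classical
kink solution of `U' = sin U`, whose derivative `-2a / (1 + a²)` equals `sin (2 arctan a + π)`.
-/

open Real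

lemma two_mul_arctan_add_sqrt_sq_add_one (a : ℝ) :
    2 * arctan (a + √(a ^ 2 + 1)) = arctan a + π / 2 := by
  set s := √(a ^ 2 + 1)
  have hs : s ^ 2 = a ^ 2 + 1 := sq_sqrt (by positivity)
  have hs_pos : 0 < s := sqrt_pos.mpr (by positivity)
  have ht_pos : 0 < a + s := by nlinarith [sq_nonneg (a + s)]
  have h_inv : (a + s)⁻¹ = s - a :=
    inv_eq_of_mul_eq_one_right (by linear_combination hs)
  have h_add : arctan (a + s) + arctan (a - s) = arctan a := by
    have h_den : 1 - (a + s) * (a - s) = 2 := by linear_combination hs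
    rw [arctan_add (by nlinarith), h_den]
    ring_nf
  have h_neg : arctan (a - s) = arctan (a + s) - π / 2 := by
    rw [← neg_sub, arctan_neg, ← h_inv, arctan_inv_of_pos ht_pos]; ring
  linarith

lemma sin_two_mul_arctan (a : ℝ) : sin (2 * arctan a) = 2 * a / (1 + a ^ 2) := by
  have hs : √(1 + a ^ 2) ^ 2 = 1 + a ^ 2 := sq_sqrt (by positivity)
  rw [sin_two_mul, sin_arctan, cos_arctan]
  field_simp
  rw [hs]

lemma hasDerivAt_two_mul_arctan_mul_exp_neg_add_pi (h ξ : ℝ) :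
    HasDerivAt (fun x => 2 * arctan (h * exp (-x)) + π)
      (sin (2 * arctan (h * exp (-ξ)) + π)) ξ := by
  have h_exp : HasDerivAt (fun x => h * exp (-x)) (-(h * exp (-ξ))) ξ := by
    simpa using ((hasDerivAt_neg ξ).exp).const_mul h
  refine ((h_exp.arctan.const_mul 2).add_const π).congr_deriv ?_
  rw [sin_add_pi, sin_two_mul_arctan]
  ring

/-- For every real h, the function
U(ξ) = 4 arctan(h e^{−ξ} + √(h² e^{−2ξ} + 1)) satisfies U' = sin U on ℝ (case γ = 0). -/
theorem stmt12 (h : ℝ) (U : ℝ → ℝ)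
    (hU : ∀ ξ : ℝ, U ξ = 4 * Real.arctan
      (h * Real.exp (-ξ) + Real.sqrt (h ^ 2 * Real.exp (-2 * ξ) + 1))) :
    ∀ ξ : ℝ, HasDerivAt U (Real.sin (U ξ)) ξ := by
  have hU' : U = fun x => 2 * arctan (h * exp (-x)) + π := by
    funext x
    have h_sq : h ^ 2 * exp (-2 * x) = (h * exp (-x)) ^ 2 := by
      rw [mul_pow, ← exp_nat_mul]; ring_nf
    rw [hU, h_sq, show (4 : ℝ) = 2 * 2 by norm_num, mul_assoc,
      two_mul_arctan_add_sqrt_sq_add_one]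
    ring
  subst hU'
  exact hasDerivAt_two_mul_arctan_mul_exp_neg_add_pi h
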